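/- Let n ≥ 1 and let Δ be a 0-normalized Γ^{n,n+1}-semi-module with n-basis 0 = a_0 < a_1 < … < a_{n-1}. Then for every i with 0 ≤ i ≤ n−2, g(a_i) = g(a_{i+1}) if and only if the whole interval of integers [a_i, a_{i+1}] is contained in Δ. -/

import Mathlib

/-- The numerical semigroup `Γ^{p,q} = {ap + bq : a, b ∈ ℕ}`. -/
def Gamma (p q : ℕ) : Set ℕ := {n | ∃ a b : ℕ, n = a * p + b * q}

/-- A `0`-normalized `Γ^{p,q}`-semi-module: `0 ∈ Δ` and `Δ + Γ^{p,q} ⊆ Δ`. -/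
def IsSemiModule (p q : ℕ) (Δ : Set ℕ) : Prop :=
  0 ∈ Δ ∧ ∀ x ∈ Δ, ∀ g ∈ Gamma p q, x + g ∈ Δ

/-- The `p`-basis of `Δ`: the set `Δ \ (Δ + p)` of `p`-generators of `Δ`. -/
def pBasis (p : ℕ) (Δ : Set ℕ) : Set ℕ := Δ \ ((· + p) '' Δ)

/-- `g(a) = |[a, a + q) \ Δ|`. -/
noncomputable def gInt (q : ℕ) (Δ : Set ℕ) (a : ℕ) : ℕ := (Set.Ico a (a + q) \ Δ).ncard

/-- The dimension of a semi-module: `dim Δ = Σ_{a ∈ p-basis} |[a, a + q) \ Δ|`. -/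
noncomputable def dimDelta (p q : ℕ) (Δ : Set ℕ) : ℕ :=
  ∑ᶠ a ∈ pBasis p Δ, gInt q Δ a

/-!
Compare the windows `[A, A + n + 1)` and `[B, B + n + 1)`: both are covered by `[A, B + n + 1)`,
so `g(A) - g(B)` is the number of gaps of `Δ` in `[A, B)` minus the number in
`[A + n + 1, B + n + 1)`. Closure under `+ n` makes `y ↦ y - n` inject the second set of gaps
into the first. If `[A, B]` contains a gap, its smallest gap `x` follows an element `x - 1` of `Δ`,
so `x + n = (x - 1) + (n + 1) ∈ Δ`, and `x` is missed by the injection: then `g(B) < g(A)`.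
-/

open Set

lemma IsSemiModule.add_left_mem {p q : ℕ} {Δ : Set ℕ} (hΔ : IsSemiModule p q Δ) {x : ℕ}
    (hx : x ∈ Δ) : x + p ∈ Δ :=
  hΔ.2 x hx p ⟨1, 0, by ring⟩

lemma IsSemiModule.add_right_mem {p q : ℕ} {Δ : Set ℕ} (hΔ : IsSemiModule p q Δ) {x : ℕ}
    (hx : x ∈ Δ) : x + q ∈ Δ :=
  hΔ.2 x hx q ⟨0, 1, by ring⟩

section Gaps

variable {Δ : Set ℕ} {A B : ℕ}

lemma ncard_Ico_diff_add_ncard_Ico_diff {a b c : ℕ} (hab : a ≤ b) (hbc : b ≤ c) :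
    (Ico a b \ Δ).ncard + (Ico b c \ Δ).ncard = (Ico a c \ Δ).ncard := by
  rw [← Ico_union_Ico_eq_Ico hab hbc, union_sdiff_distrib,
    ncard_union_eq (Disjoint.mono sdiff_subset sdiff_subset (Ico_disjoint_Ico_same))
      ((finite_Ico _ _).sdiff) ((finite_Ico _ _).sdiff)]

lemma gInt_add_ncard_Ico_diff (q : ℕ) (hAB : A ≤ B) :
    gInt q Δ A + (Ico (A + q) (B + q) \ Δ).ncard = (Ico A B \ Δ).ncard + gInt q Δ B := by
  unfold gInt
  rw [ncard_Ico_diff_add_ncard_Ico_diff (by omega) (by omega),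
    ncard_Ico_diff_add_ncard_Ico_diff hAB (by omega)]

variable {n : ℕ}

lemma injOn_sub_Ico_add_diff :
    InjOn (· - n) (Ico (A + (n + 1)) (B + (n + 1)) \ Δ) := by
  intro y₁ hy₁ y₂ hy₂ h
  have := hy₁.1.1
  have := hy₂.1.1
  simp only at h
  omega

lemma mapsTo_sub_Ico_add_diff (hstep : ∀ x ∈ Δ, x + n ∈ Δ) (hB : B ∈ Δ) :
    MapsTo (· - n) (Ico (A + (n + 1)) (B + (n + 1)) \ Δ) (Ico A B \ Δ) := by
  rintro y ⟨⟨hAy, hyB⟩, hy⟩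
  have hy' : y - n ∉ Δ := fun h ↦ hy (by simpa [show y - n + n = y by omega] using hstep _ h)
  have hne : y - n ≠ B := fun h ↦ hy' (h ▸ hB)
  show y - n ∈ Ico A B \ Δ
  exact ⟨⟨by omega, by omega⟩, hy'⟩

lemma ncard_Ico_add_diff_le (hstep : ∀ x ∈ Δ, x + n ∈ Δ) (hB : B ∈ Δ) :
    (Ico (A + (n + 1)) (B + (n + 1)) \ Δ).ncard ≤ (Ico A B \ Δ).ncard :=
  ncard_le_ncard_of_injOn _ (mapsTo_sub_Ico_add_diff hstep hB) injOn_sub_Ico_add_diff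
    (finite_Ico _ _).sdiff

lemma exists_first_gap (hA : A ∈ Δ) (hgap : ¬ Icc A B ⊆ Δ) :
    ∃ x, A < x ∧ x ≤ B ∧ x ∉ Δ ∧ x - 1 ∈ Δ := by
  classical
  have hex : ∃ x, A ≤ x ∧ x ≤ B ∧ x ∉ Δ := by
    obtain ⟨x, ⟨hAx, hxB⟩, hx⟩ := not_subset.mp hgap
    exact ⟨x, hAx, hxB, hx⟩
  obtain ⟨hAx, hxB, hx⟩ := Nat.find_spec hex
  have hAx' : A < Nat.find hex := lt_of_le_of_ne hAx fun h ↦ hx (h ▸ hA)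
  refine ⟨Nat.find hex, hAx', hxB, hx, ?_⟩
  by_contra hprev
  exact Nat.find_min hex (by omega : Nat.find hex - 1 < Nat.find hex) ⟨by omega, by omega, hprev⟩

lemma ncard_Ico_add_diff_lt (hstep : ∀ x ∈ Δ, x + n ∈ Δ) (hstep' : ∀ x ∈ Δ, x + (n + 1) ∈ Δ)
    (hA : A ∈ Δ) (hB : B ∈ Δ) (hgap : ¬ Icc A B ⊆ Δ) :
    (Ico (A + (n + 1)) (B + (n + 1)) \ Δ).ncard < (Ico A B \ Δ).ncard := by
  obtain ⟨x, hAx, hxB, hx, hprev⟩ := exists_first_gap hA hgap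
  have hxB' : x < B := lt_of_le_of_ne hxB fun h ↦ hx (h ▸ hB)
  have hx_mem : x ∈ Ico A B \ Δ := ⟨⟨hAx.le, hxB'⟩, hx⟩
  have hx_missed : ∀ y ∈ Ico (A + (n + 1)) (B + (n + 1)) \ Δ, y - n ≠ x := by
    rintro y ⟨⟨hAy, -⟩, hy⟩ rfl
    exact hy (by simpa [show y - n - 1 + (n + 1) = y by omega] using hstep' _ hprev)
  calc (Ico (A + (n + 1)) (B + (n + 1)) \ Δ).ncard
      ≤ ((Ico A B \ Δ) \ {x}).ncard :=
        ncard_le_ncard_of_injOn _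
          (fun y hy ↦ ⟨mapsTo_sub_Ico_add_diff hstep hB hy, hx_missed y hy⟩)
          injOn_sub_Ico_add_diff ((finite_Ico _ _).sdiff.sdiff)
    _ < (Ico A B \ Δ).ncard := ncard_sdiff_singleton_lt_of_mem hx_mem (finite_Ico _ _).sdiff

theorem gInt_eq_iff_Icc_subset (hstep : ∀ x ∈ Δ, x + n ∈ Δ)
    (hstep' : ∀ x ∈ Δ, x + (n + 1) ∈ Δ) (hA : A ∈ Δ) (hB : B ∈ Δ) (hAB : A ≤ B) :
    gInt (n + 1) Δ A = gInt (n + 1) Δ B ↔ Icc A B ⊆ Δ := by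
  have hwindow := gInt_add_ncard_Ico_diff (Δ := Δ) (n + 1) hAB
  constructor
  · intro hg
    by_contra hgap
    have := ncard_Ico_add_diff_lt hstep hstep' hA hB hgap
    omega
  · intro hsub
    have hnogap : Ico A B \ Δ = ∅ :=
      sdiff_eq_empty.mpr fun x hx ↦ hsub (Ico_subset_Icc_self hx)
    have := ncard_Ico_add_diff_le (A := A) hstep hB
    rw [hnogap, ncard_empty] at this hwindow
    omega

end Gaps

/-- for the `n`-basis `0 = a_0 < … < a_{n-1}` of a `Γ^{n,n+1}`-semi-module,
`g(a_i) = g(a_{i+1})` iff the interval of integers `[a_i, a_{i+1}]` is contained in `Δ`. -/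
theorem stmt_9 (n : ℕ) (Δ : Set ℕ) (hΔ : IsSemiModule n (n + 1) Δ)
    (a : Fin n → ℕ) (ha : StrictMono a) (hrange : Set.range a = pBasis n Δ)
    (i : ℕ) (hi : i + 1 < n) :
    gInt (n + 1) Δ (a ⟨i, by omega⟩) = gInt (n + 1) Δ (a ⟨i + 1, hi⟩) ↔
      Set.Icc (a ⟨i, by omega⟩) (a ⟨i + 1, hi⟩) ⊆ Δ := by
  have hbasis : ∀ j, a j ∈ Δ := fun j ↦ (hrange ▸ mem_range_self j : a j ∈ pBasis n Δ).1
  exact gInt_eq_iff_Icc_subset (fun _ ↦ hΔ.add_left_mem) (fun _ ↦ hΔ.add_right_mem)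
    (hbasis _) (hbasis _) (ha.monotone (Fin.mk_le_mk.mpr (Nat.le_succ i)))
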